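/- Let p be a positive integer, 0 ≤ γ < p, and 0 < β ≤ 1. Let H be analytic on 𝔻 with H(0) = p. Then H satisfies |H(z) - p| < β |(p - 2γ) + H(z)| for all z ∈ 𝔻 if and only if there exists an analytic function φ on 𝔻 with |φ(z)| ≤ β for all z ∈ 𝔻 such that H(z) = ( p - (p-2γ) z φ(z) ) / ( 1 + z φ(z) ) for all z ∈ 𝔻. -/

import Mathlib

/-!
The Möbius map `w ↦ (a - b w) / (1 + w)` with `a = p`, `b = p - 2γ` has determinant
`-(a + b) = -2(p - γ) ≠ 0`; its inverse sends `H` to `w = (a - H) / (b + H)`, and under it the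
condition `|H - a| < β |b + H|` becomes `|w| < β`. Since `H(0) = a` forces `w(0) = 0`, Schwarz's
lemma writes `w(z) = z φ(z)` with `|φ| ≤ β`. Conversely, for `|z| < 1` we have
`|z φ(z)| < β ≤ 1`, so the Möbius map is defined at `w = z φ(z)` and the condition holds there.
-/

open Complex Metric

section Mobius

variable {𝕜 : Type*} [NormedField 𝕜] {a b h u : 𝕜}

lemma mobius_sub_eq (hu : 1 + u ≠ 0) : (a - b * u) / (1 + u) - a = -((a + b) * u) / (1 + u) := by
  field_simp
  ring

lemma add_mobius_eq (hu : 1 + u ≠ 0) : b + (a - b * u) / (1 + u) = (a + b) / (1 + u) := by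
  field_simp
  ring

lemma one_add_ne_zero_of_norm_lt_one (hu : ‖u‖ < 1) : 1 + u ≠ 0 := by
  intro h0
  rw [eq_neg_of_add_eq_zero_right h0, norm_neg, norm_one] at hu
  exact hu.false

lemma norm_mobius_sub_lt {β : ℝ} (hab : a + b ≠ 0) (hu : ‖u‖ < β) (hβ : β ≤ 1) :
    ‖(a - b * u) / (1 + u) - a‖ < β * ‖b + (a - b * u) / (1 + u)‖ := by
  have hu1 : 1 + u ≠ 0 := one_add_ne_zero_of_norm_lt_one (hu.trans_le hβ)
  rw [mobius_sub_eq hu1, add_mobius_eq hu1, norm_div, norm_div, norm_neg, norm_mul, mul_div_assoc',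
    div_lt_div_iff_of_pos_right (norm_pos_iff.mpr hu1), mul_comm β]
  exact mul_lt_mul_of_pos_left hu (norm_pos_iff.mpr hab)

lemma eq_mobius_of_add_ne_zero (hab : a + b ≠ 0) (hh : b + h ≠ 0) :
    h = (a - b * ((a - h) / (b + h))) / (1 + (a - h) / (b + h)) := by
  have hden : 1 + (a - h) / (b + h) = (a + b) / (b + h) := by
    field_simp
    ring
  rw [hden, eq_div_iff (div_ne_zero hab hh)]
  field_simp
  ring

lemma add_ne_zero_of_norm_sub_lt {β : ℝ} (h_lt : ‖h - a‖ < β * ‖b + h‖) : b + h ≠ 0 := by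
  intro h0
  rw [h0, norm_zero, mul_zero] at h_lt
  exact (norm_nonneg _).not_gt h_lt

lemma norm_div_lt_of_norm_sub_lt {β : ℝ} (h_lt : ‖h - a‖ < β * ‖b + h‖) :
    ‖(a - h) / (b + h)‖ < β := by
  rwa [norm_div, div_lt_iff₀ (norm_pos_iff.mpr (add_ne_zero_of_norm_sub_lt h_lt)), norm_sub_rev]

end Mobius

theorem exists_analyticOnNhd_eq_mul_of_norm_le {w : ℂ → ℂ} {β : ℝ}
    (hw : AnalyticOnNhd ℂ w (ball 0 1)) (hw0 : w 0 = 0) (hwβ : ∀ z ∈ ball 0 1, ‖w z‖ ≤ β) :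
    ∃ φ : ℂ → ℂ, AnalyticOnNhd ℂ φ (ball 0 1) ∧ (∀ z ∈ ball 0 1, ‖φ z‖ ≤ β) ∧
      ∀ z ∈ ball 0 1, w z = z * φ z := by
  refine ⟨dslope w 0, ?_, fun z hz ↦ ?_, fun z _ ↦ ?_⟩
  · rw [analyticOnNhd_iff_differentiableOn isOpen_ball,
      Complex.differentiableOn_dslope (ball_mem_nhds 0 one_pos)]
    exact hw.differentiableOn
  · have h_maps : Set.MapsTo w (ball 0 1) (closedBall (w 0) β) := fun z hz ↦ by
      simpa [hw0] using hwβ z hz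
    simpa using Complex.norm_dslope_le_div_of_mapsTo_ball hw.differentiableOn h_maps hz
  · simpa [hw0] using (sub_smul_dslope w 0 z).symm

theorem forall_norm_sub_lt_iff_exists_eq_mobius {a b : ℂ} (hab : a + b ≠ 0) {β : ℝ}
    (hβ0 : 0 < β) (hβ1 : β ≤ 1) {H : ℂ → ℂ} (hH : AnalyticOnNhd ℂ H (ball 0 1)) (hH0 : H 0 = a) :
    (∀ z ∈ ball (0 : ℂ) 1, ‖H z - a‖ < β * ‖b + H z‖) ↔
      ∃ φ : ℂ → ℂ, AnalyticOnNhd ℂ φ (ball 0 1) ∧ (∀ z ∈ ball 0 1, ‖φ z‖ ≤ β) ∧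
        ∀ z ∈ ball 0 1, H z = (a - b * z * φ z) / (1 + z * φ z) := by
  constructor
  · intro h_lt
    have hw : AnalyticOnNhd ℂ (fun z ↦ (a - H z) / (b + H z)) (ball 0 1) :=
      (analyticOnNhd_const.sub hH).div (analyticOnNhd_const.add hH)
        fun z hz ↦ add_ne_zero_of_norm_sub_lt (h_lt z hz)
    obtain ⟨φ, hφ, hφβ, hwφ⟩ := exists_analyticOnNhd_eq_mul_of_norm_le hw (by simp [hH0])
      fun z hz ↦ (norm_div_lt_of_norm_sub_lt (h_lt z hz)).le
    refine ⟨φ, hφ, hφβ, fun z hz ↦ ?_⟩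
    rw [mul_assoc b, ← hwφ z hz]
    exact eq_mobius_of_add_ne_zero hab (add_ne_zero_of_norm_sub_lt (h_lt z hz))
  · rintro ⟨φ, -, hφβ, hHφ⟩ z hz
    have hzφ : ‖z * φ z‖ < β := by
      rw [norm_mul]
      exact (mul_le_mul_of_nonneg_left (hφβ z hz) (norm_nonneg z)).trans_lt
        (mul_lt_of_lt_one_left hβ0 (mem_ball_zero_iff.mp hz))
    rw [hHφ z hz, mul_assoc b]
    exact norm_mobius_sub_lt hab hzφ hβ1

theorem lemma_Padmanabhan_general
    (p : ℕ) (γ : ℝ) (hγp : γ < p)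
    (β : ℝ) (hβ0 : 0 < β) (hβ1 : β ≤ 1)
    (H : ℂ → ℂ) (hH : AnalyticOnNhd ℂ H (ball (0 : ℂ) 1)) (hH0 : H 0 = (p : ℂ)) :
    (∀ z ∈ ball (0 : ℂ) 1,
        ‖H z - (p : ℂ)‖ <
          β * ‖((p : ℂ) - 2 * (γ : ℂ)) + H z‖) ↔
      (∃ φ : ℂ → ℂ, AnalyticOnNhd ℂ φ (ball (0 : ℂ) 1) ∧
        (∀ z ∈ ball (0 : ℂ) 1, ‖φ z‖ ≤ β) ∧
        (∀ z ∈ ball (0 : ℂ) 1,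
          H z = ((p : ℂ) - ((p : ℂ) - 2 * (γ : ℂ)) * z * φ z) / (1 + z * φ z))) := by
  have hab : (p : ℂ) + ((p : ℂ) - 2 * (γ : ℂ)) ≠ 0 := by
    have h_real : (p : ℂ) + ((p : ℂ) - 2 * (γ : ℂ)) = ((2 * (p - γ) : ℝ) : ℂ) := by
      push_cast
      ring
    rw [h_real, ofReal_ne_zero]
    linarith
  exact forall_norm_sub_lt_iff_exists_eq_mobius hab hβ0 hβ1 hH hH0

/-- Lemma 2: an analytic function `H` on the unit disk with `H(0) = p` satisfies
`|H(z) - p| < β |(p-2γ) + H(z)|` on the disk if and only if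
`H(z) = (p - (p-2γ) z φ(z)) / (1 + z φ(z))` for some analytic `φ` with `|φ| ≤ β`. -/
theorem lemma_Padmanabhan
    (p : ℕ) (hp : 0 < p) (γ : ℝ) (hγ0 : 0 ≤ γ) (hγp : γ < p)
    (β : ℝ) (hβ0 : 0 < β) (hβ1 : β ≤ 1)
    (H : ℂ → ℂ) (hH : AnalyticOnNhd ℂ H (ball (0 : ℂ) 1)) (hH0 : H 0 = (p : ℂ)) :
    (∀ z ∈ ball (0 : ℂ) 1,
        ‖H z - (p : ℂ)‖ <
          β * ‖((p : ℂ) - 2 * (γ : ℂ)) + H z‖) ↔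
      (∃ φ : ℂ → ℂ, AnalyticOnNhd ℂ φ (ball (0 : ℂ) 1) ∧
        (∀ z ∈ ball (0 : ℂ) 1, ‖φ z‖ ≤ β) ∧
        (∀ z ∈ ball (0 : ℂ) 1,
          H z = ((p : ℂ) - ((p : ℂ) - 2 * (γ : ℂ)) * z * φ z) / (1 + z * φ z))) :=
  lemma_Padmanabhan_general p γ hγp β hβ0 hβ1 H hH hH0
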